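/- For every p ∈ [1/2, 1) and every η > 0, Φ(Φ⁻¹(p) + η) ≥ 1 - (1-p)·√(π/2)·e^{-η²/2}·e^{-η·Φ⁻¹(p)}. -/

import Mathlib

/-!
Completing the square, `exp (-(u + η)² / 2) = exp (-η² / 2) exp (-η u) exp (-u² / 2)`, and
`exp (-η u) ≤ exp (-η x)` for `u > x` and `η ≥ 0`. Integrating over `u > x` gives the tail bound
`1 - Φ (x + η) ≤ exp (-η² / 2) exp (-η x) (1 - Φ x)`; at `x = Φ⁻¹ p` this is the claim even
without the factor `√(π / 2) ≥ 1`.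
-/

open Real Set

/-- The standard normal cumulative distribution function. -/
noncomputable def Phi (x : ℝ) : ℝ :=
  (Real.sqrt (2 * π))⁻¹ * ∫ u in Set.Iic x, Real.exp (-u ^ 2 / 2)

/-- The inverse of the standard normal cdf. -/
noncomputable def PhiInv : ℝ → ℝ := Function.invFun Phi

open MeasureTheory Filter Topology

lemma integrable_exp_neg_sq_div_two : Integrable fun u : ℝ => exp (-u ^ 2 / 2) := by
  simpa only [neg_mul, one_div, ← neg_div, inv_mul_eq_div] using
    integrable_exp_neg_mul_sq (b := (1 / 2 : ℝ)) one_half_pos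

lemma integral_exp_neg_sq_div_two : ∫ u : ℝ, exp (-u ^ 2 / 2) = √(2 * π) := by
  simpa only [neg_mul, one_div, ← neg_div, inv_mul_eq_div, div_inv_eq_mul, mul_comm π] using
    integral_gaussian (1 / 2)

lemma setIntegral_Ioi_add {E : Type*} [NormedAddCommGroup E] [NormedSpace ℝ E]
    (f : ℝ → E) (x η : ℝ) :
    ∫ u in Ioi (x + η), f u = ∫ u in Ioi x, f (u + η) := by
  rw [← (measurePreserving_add_right volume η).setIntegral_preimage_emb
    (measurableEmbedding_addRight η), preimage_add_const_Ioi, add_sub_cancel_right]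

lemma continuous_Phi : Continuous Phi := by
  have hprim : Continuous fun x => (√(2 * π))⁻¹ *
      ((∫ u in Iic 0, exp (-u ^ 2 / 2)) + ∫ u in (0 : ℝ)..x, exp (-u ^ 2 / 2)) :=
    continuous_const.mul
      (continuous_const.add (integrable_exp_neg_sq_div_two.continuous_primitive 0))
  refine hprim.congr fun x => ?_
  rw [Phi, ← intervalIntegral.integral_Iic_sub_Iic integrable_exp_neg_sq_div_two.integrableOn
    integrable_exp_neg_sq_div_two.integrableOn, add_sub_cancel]

lemma tendsto_Phi_atTop : Tendsto Phi atTop (𝓝 1) := by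
  have h := tendsto_setIntegral_of_monotone (s := (Iic : ℝ → Set ℝ))
    (fun _ => measurableSet_Iic) (fun _ _ => Iic_subset_Iic.2)
    integrable_exp_neg_sq_div_two.integrableOn
  rw [iUnion_Iic, setIntegral_univ, integral_exp_neg_sq_div_two] at h
  have := h.const_mul (√(2 * π))⁻¹
  rw [inv_mul_cancel₀ (sqrt_pos.2 two_pi_pos).ne'] at this
  exact this

lemma tendsto_Phi_atBot : Tendsto Phi atBot (𝓝 0) := by
  have hempty : ⋂ i : ℝ, Iic (-i) = ∅ :=
    eq_empty_of_forall_notMem fun x hx => by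
      have := mem_iInter.1 hx (-x + 1)
      simp only [mem_Iic, neg_add_rev, neg_neg] at this
      linarith
  have h := tendsto_setIntegral_of_antitone (s := fun i : ℝ => Iic (-i))
    (fun _ => measurableSet_Iic) (fun _ _ hij => Iic_subset_Iic.2 (neg_le_neg hij))
    ⟨0, integrable_exp_neg_sq_div_two.integrableOn⟩
  rw [hempty, Measure.restrict_empty, integral_zero_measure] at h
  have := (h.const_mul (√(2 * π))⁻¹).comp tendsto_neg_atBot_atTop
  simp only [mul_zero, Function.comp_def, neg_neg] at this
  exact this

lemma Phi_PhiInv {p : ℝ} (hp : p ∈ Ioo 0 1) : Phi (PhiInv p) = p := by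
  refine Function.invFun_eq (mem_range_of_exists_le_of_exists_ge continuous_Phi ?_ ?_)
  · exact ((tendsto_Phi_atBot.eventually (eventually_lt_nhds hp.1)).exists).imp fun _ => le_of_lt
  · exact ((tendsto_Phi_atTop.eventually (eventually_gt_nhds hp.2)).exists).imp fun _ => le_of_lt

lemma one_sub_Phi (x : ℝ) : 1 - Phi x = (√(2 * π))⁻¹ * ∫ u in Ioi x, exp (-u ^ 2 / 2) := by
  have htot := intervalIntegral.integral_Iic_add_Ioi (b := x)
    integrable_exp_neg_sq_div_two.integrableOn integrable_exp_neg_sq_div_two.integrableOn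
  rw [integral_exp_neg_sq_div_two] at htot
  rw [Phi, ← inv_mul_cancel₀ (sqrt_pos.2 two_pi_pos).ne', ← htot]
  ring

lemma integral_Ioi_add_le (x : ℝ) {η : ℝ} (hη : 0 ≤ η) :
    ∫ u in Ioi (x + η), exp (-u ^ 2 / 2)
      ≤ exp (-η ^ 2 / 2) * exp (-η * x) * ∫ u in Ioi x, exp (-u ^ 2 / 2) := by
  rw [setIntegral_Ioi_add, ← integral_const_mul]
  refine setIntegral_mono_on (integrable_exp_neg_sq_div_two.comp_add_right η).integrableOn
    (integrable_exp_neg_sq_div_two.const_mul _).integrableOn measurableSet_Ioi fun u hu => ?_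
  rw [← exp_add, ← exp_add, exp_le_exp]
  nlinarith [mul_le_mul_of_nonneg_left (le_of_lt (mem_Ioi.1 hu)) hη]

lemma one_sub_Phi_add_le (x : ℝ) {η : ℝ} (hη : 0 ≤ η) :
    1 - Phi (x + η) ≤ exp (-η ^ 2 / 2) * exp (-η * x) * (1 - Phi x) := by
  rw [one_sub_Phi, one_sub_Phi, mul_left_comm]
  exact mul_le_mul_of_nonneg_left (integral_Ioi_add_le x hη) (by positivity)

lemma one_le_sqrt_pi_div_two : 1 ≤ √(π / 2) :=
  one_le_sqrt.2 <| (one_le_div two_pos).2 (by linarith [pi_gt_three])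

theorem phi_shift_lower_bound (p : ℝ) (hp : p ∈ Set.Ico (1 / 2 : ℝ) 1)
    (η : ℝ) (hη : 0 < η) :
    Phi (PhiInv p + η) ≥
      1 - (1 - p) * Real.sqrt (π / 2) * Real.exp (-η ^ 2 / 2) *
        Real.exp (-η * PhiInv p) := by
  have hPhi : Phi (PhiInv p) = p := Phi_PhiInv ⟨by linarith [hp.1], hp.2⟩
  have hshift := one_sub_Phi_add_le (PhiInv p) hη.le
  rw [hPhi] at hshift
  have hweight : 0 ≤ (1 - p) * exp (-η ^ 2 / 2) * exp (-η * PhiInv p) := by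
    have : 0 ≤ 1 - p := by linarith [hp.2]
    positivity
  linarith [mul_le_mul_of_nonneg_left one_le_sqrt_pi_div_two hweight]
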